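/- Consider the Widom–Rowlinson model with M ≥ 2 particle types on the K×L square lattice Λ with open boundary conditions. Then every non-stable WR configuration σ ∈ X \ X^s satisfies Φ(σ, X^s) − H(σ) ≤ min{K,L}; in particular Φ(σ, X^s) − H(σ) < min{K,L} + 1. -/

import Mathlib

/-- Sites of the `K × L` square lattice with open boundary conditions:
`(j, i)` lies in column `c_j` and row `r_i`. -/
abbrev SiteO (K L : ℕ) := Fin L × Fin K

/-- Adjacency on the open lattice: the two sites agree in one coordinate and
differ by exactly `1` in the other (no wrap-around). -/
def adjO (K L : ℕ) (v w : SiteO K L) : Prop :=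
  (v.2 = w.2 ∧ ((v.1 : ℕ) + 1 = (w.1 : ℕ) ∨ (w.1 : ℕ) + 1 = (v.1 : ℕ))) ∨
  (v.1 = w.1 ∧ ((v.2 : ℕ) + 1 = (w.2 : ℕ) ∨ (w.2 : ℕ) + 1 = (v.2 : ℕ)))

/-- Widom–Rowlinson configurations with `M` particle types on the open lattice. -/
def IsWRO (K L M : ℕ) (σ : SiteO K L → ℕ) : Prop :=
  (∀ v, σ v ≤ M) ∧ ∀ v w, adjO K L v w → σ v = 0 ∨ σ w = 0 ∨ σ v = σ w

/-- The energy `H(σ) = -#{v : σ v ≠ 0}`. -/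
noncomputable def HO (K L : ℕ) (σ : SiteO K L → ℕ) : ℤ :=
  -(Nat.card {v : SiteO K L // σ v ≠ 0} : ℤ)

/-- `σ` and `σ'` are related by a single-site update: they differ at exactly
one site `v`, and moreover `σ v = 0` or `σ' v = 0`. -/
def UpdO (K L : ℕ) (σ σ' : SiteO K L → ℕ) : Prop :=
  ∃ v, (σ v = 0 ∨ σ' v = 0) ∧ σ v ≠ σ' v ∧ ∀ w, w ≠ v → σ w = σ' w

/-- A path `ω : σ → σ'`: a finite nonempty sequence of WR configurations from
`σ` to `σ'` whose consecutive configurations coincide or are related by a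
single-site update. -/
def IsPathO (K L M : ℕ) (ω : List (SiteO K L → ℕ)) (σ σ' : SiteO K L → ℕ) : Prop :=
  ω ≠ [] ∧ ω.head? = some σ ∧ ω.getLast? = some σ' ∧
    (∀ η ∈ ω, IsWRO K L M η) ∧
    ω.Chain' (fun η η' => η = η' ∨ UpdO K L η η')

/-- The height `Φ_ω` of a path: the maximum energy along it. -/
noncomputable def heightO (K L : ℕ) (ω : List (SiteO K L → ℕ)) : ℤ :=
  sSup {h : ℤ | ∃ η ∈ ω, HO K L η = h}

/-- The communication height `Φ(σ,σ')`: the minimal height over all paths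
`ω : σ → σ'`. -/
noncomputable def commO (K L M : ℕ) (σ σ' : SiteO K L → ℕ) : ℤ :=
  sInf {h : ℤ | ∃ ω, IsPathO K L M ω σ σ' ∧ heightO K L ω = h}

/-- The set `X^s = {s^(1),…,s^(M)}` of stable configurations. -/
def stableO (K L M : ℕ) : Set (SiteO K L → ℕ) :=
  {σ | ∃ m : ℕ, 1 ≤ m ∧ m ≤ M ∧ σ = fun _ => m}

/-- `Φ(σ, A) = min_{σ' ∈ A} Φ(σ, σ')`. -/
noncomputable def commSetO (K L M : ℕ) (σ : SiteO K L → ℕ)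
    (A : Set (SiteO K L → ℕ)) : ℤ :=
  sInf {h : ℤ | ∃ σ' ∈ A, commO K L M σ σ' = h}

/-!
Sweep the lattice along an enumeration of its sites in which neighbours have ranks at most `b`
apart and every site but the first has an earlier neighbour: column by column (`b = K`) or row
by row (`b = L`). At time `t` the particles of colour other than `m` are removed from the sites of
rank `< (t + 1) / 2`, and the sites of rank `< t / 2 - b` are filled with `m`. The lag `b` ensures
that a filled site never has a neighbour of another colour, so consecutive configurations are WR
and differ by a single-site update. The particles lost at time `t` are those in the window of
ranks between the two fronts, at most `b + 1` of them. If there are `b + 1`, some site before the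
window is a hole, since otherwise the occupied initial segment up to the window would be
monochromatic of colour `m`, the colour of the first site; that hole is already filled with `m`,
so the net loss is at most `b`.
-/

section Paths

variable {K L M : ℕ}

theorem HO_eq_neg_card (η : SiteO K L → ℕ) :
    HO K L η = -((Finset.univ.filter (η · ≠ 0)).card : ℤ) := by
  rw [HO, Nat.card_eq_fintype_card, Fintype.card_subtype]

theorem eq_or_updO_of_subsingleton_diff {η η' : SiteO K L → ℕ}
    (hsub : ∀ v w, η v ≠ η' v → η w ≠ η' w → v = w)
    (hzero : ∀ v, η v ≠ η' v → η v = 0 ∨ η' v = 0) : η = η' ∨ UpdO K L η η' := by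
  by_cases h : ∃ v, η v ≠ η' v
  · obtain ⟨v, hv⟩ := h
    exact Or.inr ⟨v, hzero v hv, hv, fun w hw => not_not.mp fun hne => hw (hsub w v hne hv)⟩
  · exact Or.inl (funext (not_exists_not.mp h))

theorem isPathO_map_range (f : ℕ → SiteO K L → ℕ) (N : ℕ) (hwr : ∀ n, IsWRO K L M (f n))
    (hstep : ∀ n < N, f n = f (n + 1) ∨ UpdO K L (f n) (f (n + 1))) :
    IsPathO K L M ((List.range (N + 1)).map f) (f 0) (f N) := by
  refine ⟨by simp, by simp [List.head?_range], by simp [List.getLast?_range], ?_, ?_⟩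
  · simpa using fun n _ => hwr n
  · exact (List.isChain_map f).2 ((List.isChain_range_succ _ _).2 hstep)

theorem HO_le_heightO {ω : List (SiteO K L → ℕ)} {η : SiteO K L → ℕ} (hη : η ∈ ω) :
    HO K L η ≤ heightO K L ω :=
  le_csSup ((ω.map (HO K L)).toFinset.finite_toSet.subset (by simp)).bddAbove ⟨η, hη, rfl⟩

theorem heightO_le {ω : List (SiteO K L → ℕ)} {c : ℤ} (hω : ω ≠ [])
    (h : ∀ η ∈ ω, HO K L η ≤ c) : heightO K L ω ≤ c :=
  csSup_le ⟨_, _, List.head_mem hω, rfl⟩ (by rintro _ ⟨η, hη, rfl⟩; exact h η hη)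

theorem HO_le_heightO_of_isPathO {ω : List (SiteO K L → ℕ)} {σ σ' : SiteO K L → ℕ}
    (hω : IsPathO K L M ω σ σ') : HO K L σ ≤ heightO K L ω :=
  HO_le_heightO (List.mem_of_mem_head? hω.2.1)

theorem commO_le_heightO {ω : List (SiteO K L → ℕ)} {σ σ' : SiteO K L → ℕ}
    (hω : IsPathO K L M ω σ σ') : commO K L M σ σ' ≤ heightO K L ω :=
  csInf_le ⟨HO K L σ, by rintro _ ⟨ω', hω', rfl⟩; exact HO_le_heightO_of_isPathO hω'⟩
    ⟨ω, hω, rfl⟩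

theorem min_HO_zero_le_commO (σ σ' : SiteO K L → ℕ) :
    min (HO K L σ) 0 ≤ commO K L M σ σ' := by
  rcases Set.eq_empty_or_nonempty {h | ∃ ω, IsPathO K L M ω σ σ' ∧ heightO K L ω = h} with
    h | h
  · rw [commO, h, Int.csInf_empty]
    exact min_le_right _ _
  · refine (min_le_left _ _).trans (le_csInf h ?_)
    rintro _ ⟨ω, hω, rfl⟩
    exact HO_le_heightO_of_isPathO hω

theorem commSetO_le_commO {σ σ' : SiteO K L → ℕ} {A : Set (SiteO K L → ℕ)}
    (h : σ' ∈ A) : commSetO K L M σ A ≤ commO K L M σ σ' :=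
  csInf_le
    ⟨min (HO K L σ) 0, by rintro _ ⟨σ'', -, rfl⟩; exact min_HO_zero_le_commO σ σ''⟩
    ⟨σ', h, rfl⟩

end Paths

section Lattice

variable {K L : ℕ}

theorem adjO_comm {v w : SiteO K L} : adjO K L v w ↔ adjO K L w v := by
  simp only [adjO, eq_comm (a := v.1), eq_comm (a := v.2)]
  tauto

theorem adjO_swap_iff {v w : SiteO K L} : adjO L K v.swap w.swap ↔ adjO K L v w :=
  Or.comm

end Lattice

structure SweepOrder (K L b : ℕ) where
  rank : SiteO K L → ℕ
  rank_injective : Function.Injective rank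
  rank_le_of_adjO : ∀ v w, adjO K L v w → rank w ≤ rank v + b
  exists_adjO_rank_lt : ∀ v, rank v ≠ 0 → ∃ w, adjO K L v w ∧ rank w < rank v

def colMajor (K L : ℕ) : SweepOrder K L K where
  rank v := finProdFinEquiv v
  rank_injective := Fin.val_injective.comp finProdFinEquiv.injective
  rank_le_of_adjO v w h := by
    have hv := v.2.isLt
    have hw := w.2.isLt
    simp only [finProdFinEquiv_apply_val]
    rcases h with ⟨h2, h1 | h1⟩ | ⟨h1, h2 | h2⟩
    · rw [h2, ← h1, mul_add]; omega
    · rw [h2, ← h1, mul_add]; omega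
    · rw [h1]; omega
    · rw [h1]; omega
  exists_adjO_rank_lt v h := by
    simp only [finProdFinEquiv_apply_val] at h ⊢
    by_cases h2 : (v.2 : ℕ) = 0
    · have h1 : (v.1 : ℕ) ≠ 0 := by rintro h1; simp [h1, h2] at h
      obtain ⟨j, hj⟩ := Nat.exists_eq_add_one_of_ne_zero h1
      refine ⟨(⟨j, by omega⟩, v.2), Or.inl ⟨rfl, Or.inr hj.symm⟩, ?_⟩
      simp only [hj, mul_add]
      omega
    · refine ⟨(v.1, ⟨v.2 - 1, by omega⟩), Or.inr ⟨rfl, Or.inr (by simp; omega)⟩, ?_⟩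
      simp only
      omega

def SweepOrder.transpose {K L b : ℕ} (o : SweepOrder L K b) : SweepOrder K L b where
  rank v := o.rank v.swap
  rank_injective := o.rank_injective.comp Prod.swap_injective
  rank_le_of_adjO v w h := o.rank_le_of_adjO _ _ (adjO_swap_iff.2 h)
  exists_adjO_rank_lt v h := by
    obtain ⟨w, hw, hlt⟩ := o.exists_adjO_rank_lt v.swap h
    exact ⟨w.swap, adjO_swap_iff.1 (by simpa using hw), by simpa using hlt⟩

namespace SweepOrder

variable {K L M b : ℕ} (o : SweepOrder K L b)

theorem exists_rank_eq_zero_of_occupied {σ : SiteO K L → ℕ} (hσ : IsWRO K L M σ)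
    (v : SiteO K L) (hocc : ∀ w, o.rank w ≤ o.rank v → σ w ≠ 0) :
    ∃ v₀, o.rank v₀ = 0 ∧ σ v = σ v₀ := by
  induction hn : o.rank v using Nat.strong_induction_on generalizing v with
  | _ n ih =>
    by_cases h0 : o.rank v = 0
    · exact ⟨v, h0, rfl⟩
    obtain ⟨w, hvw, hlt⟩ := o.exists_adjO_rank_lt v h0
    obtain ⟨v₀, h₀, hw⟩ := ih _ (hn ▸ hlt) w (fun u hu => hocc u (by omega)) rfl
    refine ⟨v₀, h₀, ?_⟩
    rcases hσ.2 v w hvw with h | h | h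
    · exact absurd h (hocc v le_rfl)
    · exact absurd h (hocc w hlt.le)
    · rw [h, hw]

def IsPrefixColor (σ : SiteO K L → ℕ) (m : ℕ) : Prop :=
  ∀ v, (∀ w, o.rank w ≤ o.rank v → σ w ≠ 0) → σ v = m

theorem exists_isPrefixColor (hM : 1 ≤ M) {σ : SiteO K L → ℕ} (hσ : IsWRO K L M σ) :
    ∃ m, 1 ≤ m ∧ m ≤ M ∧ o.IsPrefixColor σ m := by
  by_cases h : ∃ v₀, o.rank v₀ = 0 ∧ σ v₀ ≠ 0
  · obtain ⟨v₀, h₀, hne⟩ := h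
    refine ⟨σ v₀, Nat.one_le_iff_ne_zero.2 hne, hσ.1 v₀, fun v hv => ?_⟩
    obtain ⟨v₁, h₁, hv₁⟩ := o.exists_rank_eq_zero_of_occupied hσ v hv
    rw [hv₁, o.rank_injective (h₁.trans h₀.symm)]
  · refine ⟨1, le_rfl, hM, fun v hv => ?_⟩
    obtain ⟨v₁, h₁, hv₁⟩ := o.exists_rank_eq_zero_of_occupied hσ v hv
    exact absurd ⟨v₁, h₁, hv₁ ▸ hv v le_rfl⟩ h

def sweep (σ : SiteO K L → ℕ) (m t : ℕ) (v : SiteO K L) : ℕ :=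
  if o.rank v + b < t / 2 then m
  else if o.rank v < (t + 1) / 2 ∧ σ v ≠ m then 0
  else σ v

variable {σ : SiteO K L → ℕ} {m : ℕ}

theorem sweep_zero : o.sweep σ m 0 = σ := by
  funext v
  simp [sweep]

theorem sweep_eq_const : o.sweep σ m (2 * (Finset.univ.sup o.rank + b + 1)) = fun _ => m := by
  funext v
  have := Finset.le_sup (f := o.rank) (Finset.mem_univ v)
  rw [sweep, if_pos (by omega)]

theorem isWRO_sweep (hσ : IsWRO K L M σ) (hmM : m ≤ M) (t : ℕ) :
    IsWRO K L M (o.sweep σ m t) := by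
  refine ⟨fun v => ?_, fun v w hvw => ?_⟩
  · unfold sweep
    split_ifs <;> first | exact hmM | exact hσ.1 v | omega
  · have hvw' := o.rank_le_of_adjO v w hvw
    have hwv := o.rank_le_of_adjO w v (adjO_comm.1 hvw)
    rcases hσ.2 v w hvw with h | h | h <;> unfold sweep <;> split_ifs <;> simp_all <;> omega

theorem sweep_ne_succ {t : ℕ} {v : SiteO K L} (h : o.sweep σ m t v ≠ o.sweep σ m (t + 1) v) :
    (t + 1 = 2 * (o.rank v + b + 1) ∧ o.sweep σ m t v = 0) ∨
      (t = 2 * o.rank v ∧ o.sweep σ m (t + 1) v = 0) := by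
  unfold sweep at *
  split_ifs at * <;> simp_all <;> omega

theorem sweep_eq_or_updO_succ (t : ℕ) :
    o.sweep σ m t = o.sweep σ m (t + 1) ∨ UpdO K L (o.sweep σ m t) (o.sweep σ m (t + 1)) :=
  eq_or_updO_of_subsingleton_diff
    (fun v w hv hw => o.rank_injective (by
      rcases o.sweep_ne_succ hv with hv | hv <;> rcases o.sweep_ne_succ hw with hw | hw <;> omega))
    (fun v hv => (o.sweep_ne_succ hv).imp And.right And.right)

def removed (σ : SiteO K L → ℕ) (m t : ℕ) : Finset (SiteO K L) :=
  {v | t / 2 ≤ o.rank v + b ∧ o.rank v < (t + 1) / 2 ∧ σ v ≠ 0 ∧ σ v ≠ m}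

def filledHoles (σ : SiteO K L → ℕ) (t : ℕ) : Finset (SiteO K L) :=
  {v | o.rank v + b < t / 2 ∧ σ v = 0}

theorem card_removed_le (hm : o.IsPrefixColor σ m) (t : ℕ) :
    (o.removed σ m t).card ≤ b + (o.filledHoles σ t).card := by
  have himg : (o.removed σ m t).image o.rank ⊆ Finset.Ico (t / 2 - b) ((t + 1) / 2) := by
    intro n hn
    simp only [removed, Finset.mem_image, Finset.mem_filter_univ] at hn
    obtain ⟨v, hv, rfl⟩ := hn
    rw [Finset.mem_Ico]
    omega
  have hcard := Finset.card_le_card himg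
  rw [Finset.card_image_of_injective _ o.rank_injective, Nat.card_Ico] at hcard
  rcases Nat.lt_or_ge (o.removed σ m t).card (b + 1) with hlt | hge
  · omega
  -- The removed sites fill the whole window, so its first site carries a colour other than `m`;
  -- hence some earlier site is a hole, and it lies far enough back to be filled already.
  have hfull : (o.removed σ m t).image o.rank = Finset.Ico (t / 2 - b) ((t + 1) / 2) :=
    Finset.eq_of_subset_of_card_le himg (by
      rw [Finset.card_image_of_injective _ o.rank_injective, Nat.card_Ico]; omega)
  have hfirst : t / 2 - b ∈ (o.removed σ m t).image o.rank := by
    rw [hfull, Finset.mem_Ico]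
    omega
  obtain ⟨v₁, hv₁, hrank⟩ := Finset.mem_image.1 hfirst
  simp only [removed, Finset.mem_filter_univ] at hv₁
  obtain ⟨u, hu, hu0⟩ : ∃ u, o.rank u ≤ o.rank v₁ ∧ σ u = 0 := by
    by_contra! h
    exact hv₁.2.2.2 (hm v₁ h)
  have hlt : o.rank u < o.rank v₁ :=
    hu.lt_of_ne (o.rank_injective.ne (by rintro rfl; exact hv₁.2.2.1 hu0))
  have hu_filled : u ∈ o.filledHoles σ t := by
    simp only [filledHoles, Finset.mem_filter_univ]
    omega
  have := Finset.card_pos.2 ⟨u, hu_filled⟩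
  omega

theorem card_support_le_card_support_sweep (hm0 : m ≠ 0) (hm : o.IsPrefixColor σ m) (t : ℕ) :
    (Finset.univ.filter (σ · ≠ 0)).card ≤
      (Finset.univ.filter (o.sweep σ m t · ≠ 0)).card + b := by
  have hsub : Finset.univ.filter (σ · ≠ 0) ∪ o.filledHoles σ t ⊆
      Finset.univ.filter (o.sweep σ m t · ≠ 0) ∪ o.removed σ m t := by
    intro v
    simp only [removed, filledHoles, Finset.mem_union, Finset.mem_filter_univ]
    unfold sweep
    split_ifs <;> omega
  have hdisj : Disjoint (Finset.univ.filter (σ · ≠ 0)) (o.filledHoles σ t) :=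
    Finset.disjoint_filter.2 fun _ _ h h' => h h'.2
  have := (Finset.card_le_card hsub).trans (Finset.card_union_le _ _)
  rw [Finset.card_union_of_disjoint hdisj] at this
  have := o.card_removed_le hm t
  omega

theorem HO_sweep_le (hm0 : m ≠ 0) (hm : o.IsPrefixColor σ m) (t : ℕ) :
    HO K L (o.sweep σ m t) ≤ HO K L σ + b := by
  rw [HO_eq_neg_card, HO_eq_neg_card]
  have := o.card_support_le_card_support_sweep hm0 hm t
  omega

end SweepOrder

theorem SweepOrder.exists_isPathO_heightO_le {K L M b : ℕ} (o : SweepOrder K L b)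
    {σ : SiteO K L → ℕ} (hM : 1 ≤ M) (hσ : IsWRO K L M σ) :
    ∃ m, 1 ≤ m ∧ m ≤ M ∧
      ∃ ω, IsPathO K L M ω σ (fun _ => m) ∧ heightO K L ω ≤ HO K L σ + b := by
  obtain ⟨m, hm1, hmM, hm⟩ := o.exists_isPrefixColor hM hσ
  have hω := isPathO_map_range (o.sweep σ m) (2 * (Finset.univ.sup o.rank + b + 1))
    (o.isWRO_sweep hσ hmM) (fun t _ => o.sweep_eq_or_updO_succ t)
  rw [o.sweep_zero, o.sweep_eq_const] at hω
  refine ⟨m, hm1, hmM, _, hω, heightO_le hω.1 ?_⟩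
  simpa using fun t _ => o.HO_sweep_le (by omega) hm t

theorem SweepOrder.commSetO_le {K L M b : ℕ} (o : SweepOrder K L b) {σ : SiteO K L → ℕ}
    (hM : 1 ≤ M) (hσ : IsWRO K L M σ) :
    commSetO K L M σ (stableO K L M) ≤ HO K L σ + b := by
  obtain ⟨m, hm1, hmM, ω, hω, hheight⟩ := o.exists_isPathO_heightO_le hM hσ
  have hstable : (fun _ => m) ∈ stableO K L M := ⟨m, hm1, hmM, rfl⟩
  exact (commSetO_le_commO hstable).trans ((commO_le_heightO hω).trans hheight)

theorem shallow_cycles_open_general (K L M : ℕ)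
    (hM : 2 ≤ M)
    (σ : SiteO K L → ℕ) (hσ : IsWRO K L M σ) :
    commSetO K L M σ (stableO K L M) - HO K L σ ≤ ((min K L : ℕ) : ℤ) ∧
    commSetO K L M σ (stableO K L M) - HO K L σ < ((min K L : ℕ) : ℤ) + 1 := by
  have hK := (colMajor K L).commSetO_le (by omega) hσ
  have hL := (colMajor L K).transpose.commSetO_le (by omega) hσ
  omega

/-- On the open `K × L` lattice, every non-stable WR configuration `σ` satisfies
`Φ(σ, X^s) - H(σ) ≤ min{K,L}`; in particular `Φ(σ, X^s) - H(σ) < min{K,L} + 1`. -/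
theorem shallow_cycles_open (K L M : ℕ)
    (hK : 2 ≤ K) (hL : 2 ≤ L) (hM : 2 ≤ M)
    (σ : SiteO K L → ℕ) (hσ : IsWRO K L M σ) (hns : σ ∉ stableO K L M) :
    commSetO K L M σ (stableO K L M) - HO K L σ ≤ ((min K L : ℕ) : ℤ) ∧
    commSetO K L M σ (stableO K L M) - HO K L σ < ((min K L : ℕ) : ℤ) + 1 :=
  shallow_cycles_open_general K L M hM σ hσ
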